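/- arXiv:2304.00199 — 3 statements merged into one kernel-verified Lean document; each statement's English description precedes it below -/
import Mathlib

section
/- Let Σ₀ = diag(a²/4, b²/4) with a,b > 0, let R_t be the 2×2 rotation matrix by angle t, and Σ_t = R_t Σ₀ R_{−t}. Then tr((Σ₀^{1/2} Σ_t Σ₀^{1/2})^{1/2}) = (1/4)·√((a²+b²)² cos² t + 4a²b² sin² t). -/
open Matrix Real

/-! For a positive semidefinite `2 × 2` matrix `Q`, Cayley–Hamilton gives
`(tr Q)² = tr (Q²) + 2 det Q` with `det Q = √(det Q²)` and `tr Q ≥ 0`, so `tr Q` is determined by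
the trace and determinant of `Q² = S Σ_t S`. The rotations drop out of the determinant, and the
trace is a direct computation. -/

noncomputable def rotM (t : ℝ) : Matrix (Fin 2) (Fin 2) ℝ :=
  !![Real.cos t, -Real.sin t; Real.sin t, Real.cos t]

namespace Matrix

theorem trace_sq_fin_two {R : Type*} [CommRing R] (A : Matrix (Fin 2) (Fin 2) R) :
    A.trace ^ 2 = (A * A).trace + 2 * A.det := by
  simp only [trace_fin_two, det_fin_two, mul_apply, Fin.sum_univ_two]
  ring

theorem PosSemidef.trace_eq_sqrt_of_mul_self_eq_fin_two {Q M : Matrix (Fin 2) (Fin 2) ℝ}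
    (hQ : Q.PosSemidef) (hQM : Q * Q = M) : Q.trace = √(M.trace + 2 * √M.det) := by
  have hdet : √M.det = Q.det := by
    rw [← hQM, det_mul, ← sq, sqrt_sq hQ.det_nonneg]
  rw [hdet, ← hQM, ← trace_sq_fin_two, sqrt_sq hQ.trace_nonneg]

end Matrix

theorem det_rotM (t : ℝ) : (rotM t).det = 1 := by
  simp [rotM, det_fin_two_of, ← sq]

theorem trace_diagonal_mul_rotM_conj_mul_diagonal (x y p q t : ℝ) :
    (diagonal ![x, y] * (rotM t * diagonal ![p, q] * rotM (-t)) * diagonal ![x, y]).trace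
      = x ^ 2 * (p * cos t ^ 2 + q * sin t ^ 2) + y ^ 2 * (p * sin t ^ 2 + q * cos t ^ 2) := by
  simp only [rotM, diagonal_vec2, cos_neg, sin_neg, mul_fin_two, trace_fin_two_of]
  ring

theorem det_diagonal_mul_rotM_conj_mul_diagonal (x y p q t : ℝ) :
    (diagonal ![x, y] * (rotM t * diagonal ![p, q] * rotM (-t)) * diagonal ![x, y]).det
      = (x * y) ^ 2 * (p * q) := by
  simp only [det_mul, det_rotM, det_diagonal, Fin.prod_univ_two, cons_val_zero, cons_val_one]
  ring

theorem trace_sqrt_covariance_product_general (a b t : ℝ) :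
    let Sig0 : Matrix (Fin 2) (Fin 2) ℝ := Matrix.diagonal ![a ^ 2 / 4, b ^ 2 / 4]
    let Sigt : Matrix (Fin 2) (Fin 2) ℝ := rotM t * Sig0 * rotM (-t)
    let S : Matrix (Fin 2) (Fin 2) ℝ := Matrix.diagonal ![a / 2, b / 2]
    ∀ Q : Matrix (Fin 2) (Fin 2) ℝ, Q.PosSemidef → Q * Q = S * Sigt * S →
      Q.trace = (1 / 4) * Real.sqrt ((a ^ 2 + b ^ 2) ^ 2 * Real.cos t ^ 2
        + 4 * a ^ 2 * b ^ 2 * Real.sin t ^ 2) := by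
  intro Sig0 Sigt S Q hQ hQQ
  rw [hQ.trace_eq_sqrt_of_mul_self_eq_fin_two hQQ, trace_diagonal_mul_rotM_conj_mul_diagonal,
    det_diagonal_mul_rotM_conj_mul_diagonal]
  have hdet : √((a / 2 * (b / 2)) ^ 2 * (a ^ 2 / 4 * (b ^ 2 / 4))) = a ^ 2 * b ^ 2 / 16 := by
    rw [← sqrt_sq (by positivity : 0 ≤ a ^ 2 * b ^ 2 / 16)]
    ring_nf
  rw [hdet, ← sqrt_sq (by norm_num : (0 : ℝ) ≤ 1 / 4), ← sqrt_mul (by positivity)]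
  congr 1
  linear_combination (-(a ^ 2 * b ^ 2) / 8) * sin_sq_add_cos_sq t

/-- With `Sig0 = diag(a²/4, b²/4)`, `Σ_t = R_t Sig0 R_{−t}`, and `Sig0^{1/2} = diag(a/2, b/2)`,
the positive-semidefinite square root `Q` of `Sig0^{1/2} Σ_t Sig0^{1/2}` satisfies
`tr Q = (1/4)·√((a²+b²)² cos² t + 4a²b² sin² t)`. -/
theorem trace_sqrt_covariance_product (a b t : ℝ) (ha : 0 < a) (hb : 0 < b) :
    let Sig0 : Matrix (Fin 2) (Fin 2) ℝ := Matrix.diagonal ![a ^ 2 / 4, b ^ 2 / 4]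
    let Sigt : Matrix (Fin 2) (Fin 2) ℝ := rotM t * Sig0 * rotM (-t)
    let S : Matrix (Fin 2) (Fin 2) ℝ := Matrix.diagonal ![a / 2, b / 2]
    ∀ Q : Matrix (Fin 2) (Fin 2) ℝ, Q.PosSemidef → Q * Q = S * Sigt * S →
      Q.trace = (1 / 4) * Real.sqrt ((a ^ 2 + b ^ 2) ^ 2 * Real.cos t ^ 2
        + 4 * a ^ 2 * b ^ 2 * Real.sin t ^ 2) :=
  trace_sqrt_covariance_product_general a b t
end

section
/- Let a,b > 0 with a ≠ b and define d(s,t)² = (1/2)(a² + b² − √((a²+b²)² cos²(t−s) + 4a²b² sin²(t−s))) for s,t ∈ [0,2π]. Then there is no map γ : [0,2π] → ℝ² with image in a circle {|x| = r}, r > 0, satisfying |γ(s)−γ(t)| = d(s,t) for all s,t. -/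
open Real

/-- The squared distance `d(s,t)² = (1/2)(a²+b² − √((a²+b²)² cos²(t−s) + 4a²b² sin²(t−s)))`
(the squared 2-Wasserstein distance between rotations of the uniform measure on a centered
ellipse with semi-axes `a, b`). -/
noncomputable def dsq (a b s t : ℝ) : ℝ :=
  (1 / 2) * (a ^ 2 + b ^ 2 -
    Real.sqrt ((a ^ 2 + b ^ 2) ^ 2 * Real.cos (t - s) ^ 2
      + 4 * a ^ 2 * b ^ 2 * Real.sin (t - s) ^ 2))

set_option maxHeartbeats 1000000 in
/-- If `a ≠ b`, there is no map `γ : [0,2π] → ℝ²` with image in a circle `{|x| = r}`,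
`r > 0`, satisfying `|γ(s)−γ(t)|² = d(s,t)²` for all `s,t ∈ [0,2π]`. -/
theorem no_circle_embedding_of_rotated_ellipse
    (a b : ℝ) (ha : 0 < a) (hb : 0 < b) (hab : a ≠ b) :
    ¬ ∃ (r : ℝ) (γ : ℝ → EuclideanSpace ℝ (Fin 2)), 0 < r ∧
      (∀ t ∈ Set.Icc (0 : ℝ) (2 * π), ‖γ t‖ = r) ∧
      (∀ s ∈ Set.Icc (0 : ℝ) (2 * π), ∀ t ∈ Set.Icc (0 : ℝ) (2 * π),
        ‖γ s - γ t‖ ^ 2 = dsq a b s t) := by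
  rintro ⟨r, γ, hr, hnorm, hdist⟩
  have hπ := Real.pi_pos
  -- trig evaluations
  have hc4 : Real.cos (π/4) ^ 2 = 1/2 := by
    rw [Real.cos_pi_div_four, div_pow, Real.sq_sqrt] <;> norm_num
  have hs4 : Real.sin (π/4) ^ 2 = 1/2 := by
    rw [Real.sin_pi_div_four, div_pow, Real.sq_sqrt] <;> norm_num
  -- dsq at difference π/4
  have hd1 : ∀ s t : ℝ, t - s = π/4 → dsq a b s t
      = 1/2 * (a^2+b^2 - Real.sqrt (((a^2+b^2)^2 + 4*a^2*b^2)/2)) := by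
    intro s t h
    unfold dsq
    rw [h, show (a ^ 2 + b ^ 2) ^ 2 * Real.cos (π/4) ^ 2
        + 4 * a ^ 2 * b ^ 2 * Real.sin (π/4) ^ 2
        = ((a^2+b^2)^2 + 4*a^2*b^2)/2 from by rw [hc4, hs4]; ring]
  -- dsq at difference π/2
  have hd2 : ∀ s t : ℝ, t - s = π/2 → dsq a b s t
      = 1/2 * (a^2+b^2 - 2*(a*b)) := by
    intro s t h
    unfold dsq
    rw [h, Real.cos_pi_div_two, Real.sin_pi_div_two,
      show (a ^ 2 + b ^ 2) ^ 2 * (0:ℝ) ^ 2 + 4 * a ^ 2 * b ^ 2 * (1:ℝ) ^ 2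
        = (2*(a*b))^2 from by ring,
      Real.sqrt_sq (by positivity)]
  -- dsq at difference π
  have hd0 : dsq a b 0 π = 0 := by
    unfold dsq
    rw [show π - 0 = π from by ring, Real.cos_pi, Real.sin_pi,
      show (a ^ 2 + b ^ 2) ^ 2 * (-1:ℝ) ^ 2 + 4 * a ^ 2 * b ^ 2 * (0:ℝ) ^ 2
        = (a^2+b^2)^2 from by ring,
      Real.sqrt_sq (by positivity)]
    ring
  -- coordinates
  have hnsq : ∀ v : EuclideanSpace ℝ (Fin 2), ‖v‖^2 = v 0 ^ 2 + v 1 ^ 2 := by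
    intro v
    rw [EuclideanSpace.norm_eq, Real.sq_sqrt (by positivity), Fin.sum_univ_two]
    simp only [Real.norm_eq_abs, sq_abs]
  have hsub : ∀ (v w : EuclideanSpace ℝ (Fin 2)) (i : Fin 2), (v - w) i = v i - w i :=
    fun v w i => rfl
  -- memberships
  have m0 : (0:ℝ) ∈ Set.Icc (0:ℝ) (2*π) := ⟨le_refl _, by linarith⟩
  have m1 : π/4 ∈ Set.Icc (0:ℝ) (2*π) := ⟨by linarith, by linarith⟩
  have m2 : π/2 ∈ Set.Icc (0:ℝ) (2*π) := ⟨by linarith, by linarith⟩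
  have m3 : 3*π/4 ∈ Set.Icc (0:ℝ) (2*π) := ⟨by linarith, by linarith⟩
  have m4 : π ∈ Set.Icc (0:ℝ) (2*π) := ⟨by linarith, by linarith⟩
  -- distance in coordinates
  have key : ∀ s ∈ Set.Icc (0:ℝ) (2*π), ∀ t ∈ Set.Icc (0:ℝ) (2*π),
      (γ s 0 - γ t 0)^2 + (γ s 1 - γ t 1)^2 = dsq a b s t := by
    intro s hs t ht
    have h := hdist s hs t ht
    rw [hnsq] at h
    simpa [hsub] using h
  have nrm : ∀ t ∈ Set.Icc (0:ℝ) (2*π), γ t 0 ^ 2 + γ t 1 ^ 2 = r^2 := by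
    intro t ht
    rw [← hnsq, hnorm t ht]
  -- γ 0 = γ π
  have eP := key 0 m0 π m4
  rw [hd0] at eP
  have hXP : γ 0 = γ π := by
    have h1 : ‖γ 0 - γ π‖ ^ 2 = 0 := by rw [hnsq]; simpa [hsub] using eP
    have h2 : ‖γ 0 - γ π‖ = 0 := by
      exact pow_eq_zero_iff (two_ne_zero) |>.mp h1
    exact sub_eq_zero.mp (norm_eq_zero.mp h2)
  -- equations
  have eA1 := key 0 m0 (π/4) m1
  rw [hd1 0 (π/4) (by ring)] at eA1
  have eA2 := key (π/4) m1 (π/2) m2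
  rw [hd1 (π/4) (π/2) (by ring)] at eA2
  have eA3 := key (3*π/4) m3 π m4
  rw [hd1 (3*π/4) π (by ring)] at eA3
  rw [← hXP] at eA3
  have eA4 := key (π/2) m2 (3*π/4) m3
  rw [hd1 (π/2) (3*π/4) (by ring)] at eA4
  have eB1 := key 0 m0 (π/2) m2
  rw [hd2 0 (π/2) (by ring)] at eB1
  have eB2 := key (π/4) m1 (3*π/4) m3
  rw [hd2 (π/4) (3*π/4) (by ring)] at eB2
  have n0 := nrm 0 m0
  have n1 := nrm (π/4) m1
  have n2 := nrm (π/2) m2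
  have n3 := nrm (3*π/4) m3
  set x0 := γ 0 0 with hx0d
  set x1 := γ 0 1 with hx1d
  set y0 := γ (π/4) 0 with hy0d
  set y1 := γ (π/4) 1 with hy1d
  set z0 := γ (π/2) 0 with hz0d
  set z1 := γ (π/2) 1 with hz1d
  set w0 := γ (3*π/4) 0 with hw0d
  set w1 := γ (3*π/4) 1 with hw1d
  -- orthogonality of y - w to x and z
  have h1 : (y0-w0)*x0 + (y1-w1)*x1 = 0 := by
    linear_combination (eA3 - eA1 + n1 - n3)/2
  have h2 : (y0-w0)*z0 + (y1-w1)*z1 = 0 := by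
    linear_combination (eA4 - eA2 + n1 - n3)/2
  have hu0 : (x0*z1 - x1*z0) * (y0 - w0) = 0 := by
    linear_combination z1*h1 - x1*h2
  have hu1 : (x0*z1 - x1*z0) * (y1 - w1) = 0 := by
    linear_combination x0*h2 - z0*h1
  have hD2pos : 0 < 1/2*(a^2+b^2-2*(a*b)) := by
    have hne : a - b ≠ 0 := sub_ne_zero.mpr hab
    have h : 0 < (a-b)^2 := lt_of_le_of_ne (sq_nonneg _) (Ne.symm (pow_ne_zero 2 hne))
    linarith [h]
  have hdsq0 : (x0*z1 - x1*z0)^2 * (1/2*(a^2+b^2-2*(a*b))) = 0 := by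
    linear_combination ((x0*z1-x1*z0)*(y0-w0))*hu0 + ((x0*z1-x1*z0)*(y1-w1))*hu1
      - (x0*z1-x1*z0)^2*eB2
  have hdet : x0*z1 - x1*z0 = 0 := by
    rcases mul_eq_zero.mp hdsq0 with h' | h'
    · exact pow_eq_zero_iff two_ne_zero |>.mp h'
    · exact absurd h' (ne_of_gt hD2pos)
  have hE : x0*z0 + x1*z1 = r^2 - (1/2*(a^2+b^2-2*(a*b)))/2 := by
    linear_combination (n0 + n2 - eB1)/2
  have he2 : (x0*z0+x1*z1)^2 = (r^2)^2 := by
    linear_combination (z0^2+z1^2)*n0 + r^2*n2 - (x0*z1-x1*z0)*hdet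
  have hzz : (1/2*(a^2+b^2-2*(a*b))) * (1/2*(a^2+b^2-2*(a*b)) - 4*r^2) = 0 := by
    linear_combination 4*he2 - 4*(x0*z0+x1*z1 + r^2 - (1/2*(a^2+b^2-2*(a*b)))/2)*hE
  have hd2r : 1/2*(a^2+b^2-2*(a*b)) = 4*r^2 := by
    rcases mul_eq_zero.mp hzz with h' | h'
    · exact absurd h' (ne_of_gt hD2pos)
    · linarith
  have hs0 : (x0+z0)^2 + (x1+z1)^2 = 0 := by
    linear_combination n0 + n2 + 2*hE - hd2r
  have hx0z : x0 = -z0 := by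
    have h : (x0+z0)^2 = 0 := by linarith [hs0, sq_nonneg (x0+z0), sq_nonneg (x1+z1)]
    have := pow_eq_zero_iff two_ne_zero |>.mp h
    linarith
  have hx1z : x1 = -z1 := by
    have h : (x1+z1)^2 = 0 := by linarith [hs0, sq_nonneg (x0+z0), sq_nonneg (x1+z1)]
    have := pow_eq_zero_iff two_ne_zero |>.mp h
    linarith
  have hXYc : x0*y0 + x1*y1 = y0*z0 + y1*z1 := by
    linear_combination (eA2 - eA1 + n0 - n2)/2
  have hyz : y0*z0 + y1*z1 = 0 := by
    rw [hx0z, hx1z] at hXYc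
    linarith [hXYc]
  have hd1r : 1/2 * (a^2+b^2 - Real.sqrt (((a^2+b^2)^2 + 4*a^2*b^2)/2)) = 2*r^2 := by
    linear_combination (n1 + n2 - eA2 - 2*hyz)/1
  -- final algebra
  have hSs : 2 * Real.sqrt (((a^2+b^2)^2 + 4*a^2*b^2)/2) = a^2+b^2+2*(a*b) := by
    linarith [hd1r, hd2r]
  have hTnn : (0:ℝ) ≤ ((a^2+b^2)^2 + 4*a^2*b^2)/2 := by positivity
  have hsq := Real.sq_sqrt hTnn
  have h2' : (a^2+b^2+2*(a*b))^2 = 4 * (((a^2+b^2)^2 + 4*a^2*b^2)/2) := by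
    rw [← hSs]
    linear_combination 4*hsq
  have h3 : ((a-b)^2)^2 = 0 := by linear_combination -h2'
  have h4 : (a-b)^2 = 0 := pow_eq_zero_iff two_ne_zero |>.mp h3
  have h5 : a - b = 0 := pow_eq_zero_iff two_ne_zero |>.mp h4
  exact hab (sub_eq_zero.mp h5)
end

section
/- Assume μ₀ ∈ 𝒦 (compactly supported, absolutely continuous on ℝᵈ with density bounded above and below on its support, boundary of support null) and μ_θ = (x+θ)♯μ₀. For any slicing schedule 𝒮 as in the no-collision existence theorem, the slicing partition sets satisfy Ω^{μ_θ}_b = Ω^{μ₀}_b + θ for every binary index b, hence ℓ^{μ_θ}(x) = ℓ^{μ₀}(x−θ) for all x, and the no-collision map is t_{μ₀}^{μ_θ}(x) = x + θ for μ₀-a.e. x; consequently W_{𝒮,p}(μ_θ, μ_{θ'}) = |θ − θ'| for all p ≥ 1. -/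
open MeasureTheory Real
open scoped ENNReal NNReal RealInnerProductSpace

variable {d : ℕ}

/-- A slicing schedule, assigning to each partition cell (indexed by the binary word of
splitting decisions, most recent decision first) a unit direction along which it is
bisected. -/
structure Slicing (d : ℕ) where
  dir : List Bool → EuclideanSpace ℝ (Fin d)
  unit : ∀ b, ‖dir b‖ = 1

/-- The partition cells determined by a slicing schedule `S` and heights `h`:
`Ω_[] = ℝᵈ` and the cell `Ω_b` is bisected by the hyperplane `{x · s_b = h_b}`. -/
noncomputable def cell (S : Slicing d) (h : List Bool → ℝ) :
    List Bool → Set (EuclideanSpace ℝ (Fin d))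
  | [] => Set.univ
  | (i :: b) => cell S h b ∩ {x | if i then h b < ⟪S.dir b, x⟫ else ⟪S.dir b, x⟫ ≤ h b}

/-- `h` realizes median (equal-mass) bisections of every cell for `μ`. -/
def IsMedianHeights (S : Slicing d) (μ : Measure (EuclideanSpace ℝ (Fin d)))
    (h : List Bool → ℝ) : Prop :=
  ∀ b, μ (cell S h (false :: b)) = μ (cell S h (true :: b))

/-- The ternary label `Σ_α i_α/3^α` of a cell. -/
noncomputable def label : List Bool → ℝ
  | [] => 0
  | (i :: b) => label b + (if i then 1 else 0) / 3 ^ (b.length + 1)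

open Classical in
/-- The address (index of the nested cell) of a point at depth `k`. -/
noncomputable def addr (S : Slicing d) (h : List Bool → ℝ)
    (x : EuclideanSpace ℝ (Fin d)) : ℕ → List Bool
  | 0 => []
  | (k + 1) =>
    (if h (addr S h x k) < ⟪S.dir (addr S h x k), x⟫ then true else false) :: addr S h x k

/-- The limiting labeling function `ℓ^μ`. -/
noncomputable def ell (S : Slicing d) (h : List Bool → ℝ)
    (x : EuclideanSpace ℝ (Fin d)) : ℝ :=
  ⨆ k, label (addr S h x k)

/-- `t` is a no-collision map from `(μ, hμ)` to `(ν, hν)`: it pushes `μ` forward to `ν`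
and maps each partition cell of `μ` into the corresponding cell of `ν` (μ-a.e.). -/
def IsNoCollisionMap (S : Slicing d) (hμ hν : List Bool → ℝ)
    (μ ν : Measure (EuclideanSpace ℝ (Fin d)))
    (t : EuclideanSpace ℝ (Fin d) → EuclideanSpace ℝ (Fin d)) : Prop :=
  Measurable t ∧ μ.map t = ν ∧ ∀ b, ∀ᵐ x ∂μ, x ∈ cell S hμ b → t x ∈ cell S hν b

/-- The class `𝒦`: compactly supported absolutely continuous probability measures whose
density is bounded above and below on the support, with null boundary of support. -/
def MemK (μ : Measure (EuclideanSpace ℝ (Fin d))) : Prop :=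
  IsProbabilityMeasure μ ∧ μ ≪ volume ∧
  ∃ K : Set (EuclideanSpace ℝ (Fin d)), IsCompact K ∧ μ Kᶜ = 0 ∧ μ (frontier K) = 0 ∧
    ∃ c C : ℝ, 0 < c ∧
      ∀ᵐ x ∂(volume.restrict K),
        ENNReal.ofReal c ≤ μ.rnDeriv volume x ∧ μ.rnDeriv volume x ≤ ENNReal.ofReal C

/-- The finite initial branches of an infinite splitting sequence. -/
def branch (σ : ℕ → Bool) : ℕ → List Bool
  | 0 => []
  | (k + 1) => σ k :: branch σ k

/-- A schedule as in the no-collision existence theorem: all directions come from a fixed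
basis, and each direction occurs infinitely often along every infinite branch. -/
def GoodSchedule (S : Slicing d) : Prop :=
  ∃ v : Module.Basis (Fin d) ℝ (EuclideanSpace ℝ (Fin d)),
    (∀ b, ∃ (i : Fin d) (c : ℝ), S.dir b = c • v i) ∧
    ∀ (σ : ℕ → Bool) (i : Fin d),
      {k : ℕ | ∃ c : ℝ, S.dir (branch σ k) = c • v i}.Infinite

/-!
Median heights of a translate are the translated median heights, so cells, addresses and labels
of `μ₀.map (· + θ)` are those of `μ₀` shifted by `θ`, and `x ↦ x + θ` is a no-collision map.
The content is uniqueness: a measure-preserving map `u` fixing every cell is the identity a.e.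
For a half-space `A`, the relative mass of `A` in the depth-`k` cell of `x` is a bounded
martingale which doubles whenever the cut keeps all of `A ∩ cell` on one side; by Lévy's upward
theorem its limit is `𝔼[𝟙_A | ℱ_∞]`, so a.e. point of `A` sees such cuts only finitely often.
If `x ≠ u x`, they differ in some basis direction `v`; the cuts parallel to `v`, which occur
infinitely often along the common branch, each keep one of the half-spaces `{⟪v, ·⟫ ≤ q}`,
`{q ≤ ⟪v, ·⟫}` for a rational `q` between them, which puts `x` or `u x` in a null set.
-/

open Filter Topology

local notation "ℝᵈ" => EuclideanSpace ℝ (Fin d)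

section Cells

variable (S : Slicing d) (h : List Bool → ℝ)

@[simp]
theorem mem_cell_false_cons {b : List Bool} {x : ℝᵈ} :
    x ∈ cell S h (false :: b) ↔ x ∈ cell S h b ∧ ⟪S.dir b, x⟫ ≤ h b := Iff.rfl

@[simp]
theorem mem_cell_true_cons {b : List Bool} {x : ℝᵈ} :
    x ∈ cell S h (true :: b) ↔ x ∈ cell S h b ∧ h b < ⟪S.dir b, x⟫ := Iff.rfl

theorem cell_cons_subset (i : Bool) (b : List Bool) : cell S h (i :: b) ⊆ cell S h b :=
  Set.inter_subset_left

theorem measurableSet_cell (b : List Bool) : MeasurableSet (cell S h b) := by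
  induction b with
  | nil => exact .univ
  | cons i b ih =>
    have hinner : Measurable fun x : ℝᵈ => ⟪S.dir b, x⟫ := measurable_const.inner measurable_id
    cases i
    · exact ih.inter (measurableSet_le hinner measurable_const)
    · exact ih.inter (measurableSet_lt measurable_const hinner)

theorem cell_false_cons_union_cell_true_cons (b : List Bool) :
    cell S h (false :: b) ∪ cell S h (true :: b) = cell S h b := by
  ext x
  simp only [Set.mem_union, mem_cell_false_cons, mem_cell_true_cons]
  constructor
  · rintro (⟨hx, -⟩ | ⟨hx, -⟩) <;> exact hx
  · intro hx
    exact (le_or_gt ⟪S.dir b, x⟫ (h b)).imp (⟨hx, ·⟩) (⟨hx, ·⟩)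

theorem disjoint_cell_false_cons_cell_true_cons (b : List Bool) :
    Disjoint (cell S h (false :: b)) (cell S h (true :: b)) :=
  Set.disjoint_left.2 fun _ hf ht => (mem_cell_true_cons S h |>.1 ht).2.not_ge
    (mem_cell_false_cons S h |>.1 hf).2

theorem IsMedianHeights.measure_cell {μ : Measure ℝᵈ} [IsProbabilityMeasure μ]
    (hmed : IsMedianHeights S μ h) (b : List Bool) :
    μ (cell S h b) = 2⁻¹ ^ b.length := by
  induction b with
  | nil => simp [cell]
  | cons i b ih =>
    have hsum : μ (cell S h (true :: b)) + μ (cell S h (true :: b)) = 2⁻¹ ^ b.length := by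
      rw [← ih, ← cell_false_cons_union_cell_true_cons S h b,
        measure_union (disjoint_cell_false_cons_cell_true_cons S h b) (measurableSet_cell S h _),
        hmed b]
    have htrue : μ (cell S h (true :: b)) = 2⁻¹ ^ (b.length + 1) := by
      rw [← two_mul] at hsum
      rw [pow_succ', ← hsum, ← mul_assoc, ENNReal.inv_mul_cancel two_ne_zero ENNReal.ofNat_ne_top,
        one_mul]
    cases i
    · rw [hmed b, htrue, List.length_cons]
    · rw [htrue, List.length_cons]

theorem addr_succ (x : ℝᵈ) (k : ℕ) :
    addr S h x (k + 1) =
      (if h (addr S h x k) < ⟪S.dir (addr S h x k), x⟫ then true else false) :: addr S h x k :=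
  rfl

theorem length_addr (x : ℝᵈ) (k : ℕ) : (addr S h x k).length = k := by
  induction k with
  | zero => rfl
  | succ k ih => rw [addr_succ, List.length_cons, ih]

theorem mem_cell_addr (x : ℝᵈ) (k : ℕ) : x ∈ cell S h (addr S h x k) := by
  induction k with
  | zero => exact Set.mem_univ x
  | succ k ih =>
    rw [addr_succ]
    split_ifs with hx
    · exact ⟨ih, hx⟩
    · exact ⟨ih, not_lt.1 hx⟩

theorem addr_eq_of_mem_cell {b : List Bool} {x : ℝᵈ} (hx : x ∈ cell S h b) :
    addr S h x b.length = b := by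
  induction b with
  | nil => rfl
  | cons i b ih =>
    rw [List.length_cons, addr_succ, ih (cell_cons_subset S h i b hx)]
    cases i
    · simp [((mem_cell_false_cons S h).1 hx).2]
    · simp [((mem_cell_true_cons S h).1 hx).2]

theorem addr_eq_iff_mem_cell {b : List Bool} {k : ℕ} (hb : b.length = k) (x : ℝᵈ) :
    addr S h x k = b ↔ x ∈ cell S h b :=
  ⟨(· ▸ mem_cell_addr S h x k), fun hx => hb ▸ addr_eq_of_mem_cell S h hx⟩

theorem addr_preimage_singleton (k : ℕ) (b : List Bool) :
    (addr S h · k) ⁻¹' {b} = if b.length = k then cell S h b else ∅ := by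
  split_ifs with hb
  · ext x
    exact addr_eq_iff_mem_cell S h hb x
  · ext x
    simp only [Set.mem_preimage, Set.mem_singleton_iff, Set.mem_empty_iff_false, iff_false]
    rintro rfl
    exact hb (length_addr S h x k)

theorem addr_eq_branch (x : ℝᵈ) : ∃ σ : ℕ → Bool, ∀ k, addr S h x k = branch σ k := by
  refine ⟨fun k => if h (addr S h x k) < ⟪S.dir (addr S h x k), x⟫ then true else false,
    fun k => ?_⟩
  induction k with
  | zero => rfl
  | succ k ih => rw [addr_succ, branch, ← ih]

end Cells

section Translation

variable (S : Slicing d) (h : List Bool → ℝ) (θ : EuclideanSpace ℝ (Fin d))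

theorem mem_cell_translate_iff (b : List Bool) (x : ℝᵈ) :
    x ∈ cell S (fun b => h b + ⟪S.dir b, θ⟫) b ↔ x - θ ∈ cell S h b := by
  induction b with
  | nil => simp [cell]
  | cons i b ih =>
    cases i
    · simp only [mem_cell_false_cons, ih, inner_sub_right, sub_le_iff_le_add]
    · simp only [mem_cell_true_cons, ih, inner_sub_right, lt_sub_iff_add_lt]

theorem cell_translate (b : List Bool) :
    cell S (fun b => h b + ⟪S.dir b, θ⟫) b = (· + θ) '' cell S h b := by
  ext x
  rw [mem_cell_translate_iff, Set.image_add_right, Set.mem_preimage, sub_eq_add_neg]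

theorem addr_translate (x : ℝᵈ) (k : ℕ) :
    addr S (fun b => h b + ⟪S.dir b, θ⟫) x k = addr S h (x - θ) k :=
  (addr_eq_iff_mem_cell _ _ (length_addr S h (x - θ) k) x).2
    ((mem_cell_translate_iff S h θ _ x).2 (mem_cell_addr S h (x - θ) k))

theorem ell_translate (x : ℝᵈ) :
    ell S (fun b => h b + ⟪S.dir b, θ⟫) x = ell S h (x - θ) := by
  simp only [ell, addr_translate]

theorem IsMedianHeights.map_add_const {μ : Measure ℝᵈ} (hmed : IsMedianHeights S μ h) :
    IsMedianHeights S (μ.map (· + θ)) (fun b => h b + ⟪S.dir b, θ⟫) := by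
  have hpre : ∀ b, (· + θ) ⁻¹' cell S (fun b => h b + ⟪S.dir b, θ⟫) b = cell S h b := fun b => by
    ext x
    simp [mem_cell_translate_iff]
  intro b
  rw [Measure.map_apply (measurable_add_const θ) (measurableSet_cell S _ _),
    Measure.map_apply (measurable_add_const θ) (measurableSet_cell S _ _), hpre, hpre]
  exact hmed b

end Translation

section Martingale

variable (S : Slicing d) (h : List Bool → ℝ)

theorem measurableSet_addr_preimage (k : ℕ) (T : Set (List Bool)) :
    MeasurableSet ((addr S h · k) ⁻¹' T) := by
  rw [← Set.biUnion_preimage_singleton]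
  refine .biUnion T.to_countable fun b _ => ?_
  rw [addr_preimage_singleton]
  split_ifs
  exacts [measurableSet_cell S h b, .empty]

noncomputable def cellFiltration : Filtration ℕ (inferInstance : MeasurableSpace ℝᵈ) where
  seq k := MeasurableSpace.comap (addr S h · k) ⊤
  mono' := by
    refine monotone_nat_of_le_succ fun k => ?_
    have htail : (addr S h · k) = List.tail ∘ (addr S h · (k + 1)) := rfl
    rw [htail, ← MeasurableSpace.comap_comp]
    exact MeasurableSpace.comap_mono le_top
  le' k := by
    rintro s ⟨T, -, rfl⟩
    exact measurableSet_addr_preimage S h k T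

theorem measurable_comp_addr {β : Type*} [MeasurableSpace β] (g : List Bool → β) (k : ℕ) :
    Measurable[cellFiltration S h k] fun x => g (addr S h x k) :=
  fun t _ => ⟨g ⁻¹' t, trivial, rfl⟩

def keepsAt (A : Set ℝᵈ) (k : ℕ) : Set ℝᵈ :=
  {x | A ∩ cell S h (addr S h x k) ⊆ cell S h (addr S h x (k + 1))}

def keepsOften (A : Set ℝᵈ) : Set ℝᵈ :=
  limsup (keepsAt S h A) atTop

theorem measurableSet_keepsAt (A : Set ℝᵈ) (k : ℕ) :
    MeasurableSet[cellFiltration S h (k + 1)] (keepsAt S h A k) :=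
  ⟨{l | A ∩ cell S h l.tail ⊆ cell S h l}, trivial, rfl⟩

theorem measurableSet_keepsOften (A : Set ℝᵈ) :
    MeasurableSet[⨆ k, cellFiltration S h k] (keepsOften S h A) :=
  @MeasurableSet.measurableSet_limsup _ (⨆ k, cellFiltration S h k) _ fun k =>
    le_iSup (fun k => (cellFiltration S h k : MeasurableSpace ℝᵈ)) (k + 1) _
      (measurableSet_keepsAt S h A k)

-- Under median heights `2 ^ k` is the reciprocal mass of a depth-`k` cell.
noncomputable def cellRatio (μ : Measure ℝᵈ) (A : Set ℝᵈ) (k : ℕ) (x : ℝᵈ) : ℝ :=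
  μ.real (A ∩ cell S h (addr S h x k)) * 2 ^ k

theorem measurable_cellRatio (μ : Measure ℝᵈ) (A : Set ℝᵈ) (k : ℕ) :
    Measurable[cellFiltration S h k] (cellRatio S h μ A k) :=
  measurable_comp_addr S h (fun b => μ.real (A ∩ cell S h b) * 2 ^ k) k

theorem cellRatio_succ_of_mem_keepsAt (μ : Measure ℝᵈ) {A : Set ℝᵈ} {k : ℕ} {x : ℝᵈ}
    (hx : x ∈ keepsAt S h A k) :
    cellRatio S h μ A (k + 1) x = 2 * cellRatio S h μ A k x := by
  have hA : A ∩ cell S h (addr S h x (k + 1)) = A ∩ cell S h (addr S h x k) :=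
    subset_antisymm (Set.inter_subset_inter_right A (cell_cons_subset S h _ _))
      fun z hz => ⟨hz.1, hx hz⟩
  rw [cellRatio, cellRatio, hA, pow_succ]
  ring

theorem eq_zero_of_tendsto_of_frequently_eq_two_mul {u : ℕ → ℝ} {L : ℝ}
    (hu : Tendsto u atTop (𝓝 L)) (hdouble : ∃ᶠ k in atTop, u (k + 1) = 2 * u k) : L = 0 := by
  have hlim : Tendsto (fun k => u (k + 1) - 2 * u k) atTop (𝓝 (L - 2 * L)) :=
    ((tendsto_add_atTop_iff_nat 1).2 hu).sub (hu.const_mul 2)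
  have hmem : L - 2 * L ∈ ({0} : Set ℝ) :=
    isClosed_singleton.mem_of_frequently_of_tendsto
      (hdouble.mono fun k hk => by simp [hk]) hlim
  linarith [Set.mem_singleton_iff.1 hmem]

theorem setIntegral_addr_preimage_eq {μ : Measure ℝᵈ} {F G : ℝᵈ → ℝ} (hF : Integrable F μ) (hG : Integrable G μ)
    {k : ℕ} (hcell : ∀ b : List Bool, b.length = k →
      ∫ x in cell S h b, F x ∂μ = ∫ x in cell S h b, G x ∂μ) (T : Set (List Bool)) :
    ∫ x in (addr S h · k) ⁻¹' T, F x ∂μ = ∫ x in (addr S h · k) ⁻¹' T, G x ∂μ := by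
  have hT : (addr S h · k) ⁻¹' T = ⋃ b : T, (addr S h · k) ⁻¹' {(b : List Bool)} := by
    ext x; simp
  have hmeas : ∀ b : T, MeasurableSet ((addr S h · k) ⁻¹' {(b : List Bool)}) :=
    fun b => measurableSet_addr_preimage S h k _
  have hdisj : Pairwise (Function.onFun Disjoint fun b : T => (addr S h · k) ⁻¹' {(b : List Bool)}) :=
    fun b b' hbb' => Set.disjoint_left.2 fun x hx hx' => hbb' (Subtype.ext (hx.symm.trans hx'))
  rw [hT, integral_iUnion hmeas hdisj hF.integrableOn, integral_iUnion hmeas hdisj hG.integrableOn]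
  refine tsum_congr fun b => ?_
  rw [addr_preimage_singleton]
  split_ifs with hb
  exacts [hcell b hb, by simp]

variable {S h} {μ : Measure (EuclideanSpace ℝ (Fin d))} [IsProbabilityMeasure μ]

theorem IsMedianHeights.measureReal_cell (hmed : IsMedianHeights S μ h) (b : List Bool) :
    μ.real (cell S h b) = 2⁻¹ ^ b.length := by
  simp [measureReal_def, hmed.measure_cell]

theorem IsMedianHeights.integrable_cellRatio (hmed : IsMedianHeights S μ h) (A : Set ℝᵈ)
    (k : ℕ) : Integrable (cellRatio S h μ A k) μ := by
  refine .of_bound ((measurable_cellRatio S h μ A k).mono ((cellFiltration S h).le k) le_rfl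
    |>.aestronglyMeasurable) 1 (.of_forall fun x => ?_)
  have hle : μ.real (A ∩ cell S h (addr S h x k)) ≤ 2⁻¹ ^ k :=
    (measureReal_mono Set.inter_subset_right).trans_eq
      (by rw [hmed.measureReal_cell, length_addr])
  rw [Real.norm_of_nonneg (by unfold cellRatio; positivity), cellRatio]
  calc μ.real (A ∩ cell S h (addr S h x k)) * 2 ^ k ≤ 2⁻¹ ^ k * 2 ^ k := by gcongr
    _ = 1 := by rw [← mul_pow]; norm_num

theorem IsMedianHeights.setIntegral_cellRatio (hmed : IsMedianHeights S μ h) (A : Set ℝᵈ)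
    {b : List Bool} {k : ℕ} (hb : b.length = k) :
    ∫ x in cell S h b, cellRatio S h μ A k x ∂μ = μ.real (A ∩ cell S h b) := by
  rw [setIntegral_congr_fun (measurableSet_cell S h b)
      (g := fun _ => μ.real (A ∩ cell S h b) * 2 ^ k)
      fun x hx => by rw [cellRatio, (addr_eq_iff_mem_cell S h hb x).2 hx],
    setIntegral_const, hmed.measureReal_cell, hb, smul_eq_mul, mul_left_comm, ← mul_pow]
  norm_num

theorem IsMedianHeights.cellRatio_ae_eq_condExp (hmed : IsMedianHeights S μ h) {A : Set ℝᵈ}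
    (hA : MeasurableSet A) (k : ℕ) :
    cellRatio S h μ A k =ᵐ[μ] μ[A.indicator (fun _ => (1 : ℝ)) | cellFiltration S h k] := by
  have hf : Integrable (A.indicator (fun _ => (1 : ℝ))) μ := (integrable_const (1 : ℝ)).indicator hA
  refine ae_eq_condExp_of_forall_setIntegral_eq ((cellFiltration S h).le k) hf
    (fun _ _ _ => (hmed.integrable_cellRatio A k).integrableOn) ?_
    (measurable_cellRatio S h μ A k).aestronglyMeasurable
  rintro _ ⟨T, -, rfl⟩ -
  refine setIntegral_addr_preimage_eq S h (hmed.integrable_cellRatio A k) hf (fun b hb => ?_) T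
  rw [hmed.setIntegral_cellRatio A hb, setIntegral_indicator hA, Set.inter_comm]
  simp

theorem IsMedianHeights.measure_keepsOften_inter (hmed : IsMedianHeights S μ h) {A : Set ℝᵈ}
    (hA : MeasurableSet A) : μ (keepsOften S h A ∩ A) = 0 := by
  set ℱ := cellFiltration S h
  set g := μ[A.indicator (fun _ => (1 : ℝ)) | ⨆ k, ℱ k]
  have hle : ⨆ k, ℱ k ≤ (inferInstance : MeasurableSpace ℝᵈ) := iSup_le ℱ.le
  have hconv : ∀ᵐ x ∂μ, Tendsto (cellRatio S h μ A · x) atTop (𝓝 (g x)) := by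
    filter_upwards [tendsto_ae_condExp (ℱ := ℱ) (A.indicator (fun _ => (1 : ℝ))),
      ae_all_iff.2 (hmed.cellRatio_ae_eq_condExp hA)] with x hx hratio
    exact hx.congr fun k => (hratio k).symm
  have hzero : ∀ᵐ x ∂μ, x ∈ keepsOften S h A → g x = 0 := by
    filter_upwards [hconv] with x hx hxA
    exact eq_zero_of_tendsto_of_frequently_eq_two_mul hx
      ((mem_limsup_iff_frequently_mem.1 hxA).mono fun k hk => cellRatio_succ_of_mem_keepsAt S h μ hk)
  have hreal : μ.real (keepsOften S h A ∩ A) = 0 := by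
    calc μ.real (keepsOften S h A ∩ A)
        = ∫ x in keepsOften S h A, A.indicator (fun _ => (1 : ℝ)) x ∂μ := by
          rw [setIntegral_indicator hA]; simp
      _ = ∫ x in keepsOften S h A, g x ∂μ :=
          (setIntegral_condExp hle ((integrable_const (1 : ℝ)).indicator hA)
            (measurableSet_keepsOften S h A)).symm
      _ = 0 := setIntegral_eq_zero_of_ae_eq_zero hzero
  exact (measureReal_eq_zero_iff).1 hreal

end Martingale

section Uniqueness

variable {S : Slicing d} {h : List Bool → ℝ}

theorem isUpperSet_or_isLowerSet_halfLine (c r : ℝ) (i : Bool) :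
    IsUpperSet {t : ℝ | if i then r < c * t else c * t ≤ r} ∨
      IsLowerSet {t : ℝ | if i then r < c * t else c * t ≤ r} := by
  rcases le_total 0 c with hc | hc <;> cases i <;>
    simp only [Bool.false_eq_true, if_true, if_false]
  · exact .inr fun a b hba ha => (mul_le_mul_of_nonneg_left hba hc).trans ha
  · exact .inl fun a b hab ha => ha.trans_le (mul_le_mul_of_nonneg_left hab hc)
  · exact .inl fun a b hab ha => (mul_le_mul_of_nonpos_left hab hc).trans ha
  · exact .inr fun a b hba ha => ha.trans_le (mul_le_mul_of_nonpos_left hba hc)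

theorem mem_cell_cons_iff_of_dir_eq_smul {b : List Bool} {c : ℝ} {v : ℝᵈ}
    (hdir : S.dir b = c • v) (i : Bool) (w : ℝᵈ) :
    w ∈ cell S h (i :: b) ↔
      w ∈ cell S h b ∧ ⟪v, w⟫ ∈ {t : ℝ | if i then h b < c * t else c * t ≤ h b} := by
  simp only [cell, Set.mem_inter_iff, Set.mem_ofPred_eq, hdir, real_inner_smul_left]

theorem mem_keepsAt_or_mem_keepsAt {v x y z : ℝᵈ} {c q : ℝ} {k : ℕ}
    (hdir : S.dir (addr S h x k) = c • v)
    (hy : y ∈ cell S h (addr S h x (k + 1))) (hz : z ∈ cell S h (addr S h x (k + 1)))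
    (hyq : ⟪v, y⟫ < q) (hqz : q < ⟪v, z⟫) :
    x ∈ keepsAt S h {w | ⟪v, w⟫ ≤ q} k ∨ x ∈ keepsAt S h {w | q ≤ ⟪v, w⟫} k := by
  obtain ⟨i, hi⟩ : ∃ i, addr S h x (k + 1) = i :: addr S h x k := ⟨_, addr_succ S h x k⟩
  rw [hi, mem_cell_cons_iff_of_dir_eq_smul hdir] at hy hz
  rcases isUpperSet_or_isLowerSet_halfLine c (h (addr S h x k)) i with hup | hlow
  · refine .inr fun w ⟨hw, hwcell⟩ => ?_
    rw [hi, mem_cell_cons_iff_of_dir_eq_smul hdir]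
    exact ⟨hwcell, hup (hyq.le.trans hw) hy.2⟩
  · refine .inl fun w ⟨hw, hwcell⟩ => ?_
    rw [hi, mem_cell_cons_iff_of_dir_eq_smul hdir]
    exact ⟨hwcell, hlow (hw.trans hqz.le) hz.2⟩

theorem exists_rat_mem_keepsOften {v y z : ℝᵈ}
    (hv : ∀ σ, {k : ℕ | ∃ c : ℝ, S.dir (branch σ k) = c • v}.Infinite)
    (haddr : ∀ k, addr S h z k = addr S h y k) (hlt : ⟪v, y⟫ < ⟪v, z⟫) :
    ∃ q : ℚ, y ∈ keepsOften S h {w | ⟪v, w⟫ ≤ q} ∩ {w | ⟪v, w⟫ ≤ q} ∨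
      z ∈ keepsOften S h {w | q ≤ ⟪v, w⟫} ∩ {w | q ≤ ⟪v, w⟫} := by
  obtain ⟨q, hyq, hqz⟩ := exists_rat_btwn hlt
  obtain ⟨σ, hσ⟩ := addr_eq_branch S h y
  have hfreq : ∃ᶠ k in atTop, ∃ c : ℝ, S.dir (addr S h y k) = c • v := by
    simpa only [hσ] using Nat.frequently_atTop_iff_infinite.2 (hv σ)
  have hkeep := hfreq.mono fun k ⟨c, hc⟩ =>
    mem_keepsAt_or_mem_keepsAt hc (mem_cell_addr S h y (k + 1))
      (haddr (k + 1) ▸ mem_cell_addr S h z (k + 1)) hyq hqz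
  refine ⟨q, (frequently_or_distrib.1 hkeep).imp (fun hA => ⟨?_, hyq.le⟩) fun hB => ⟨?_, hqz.le⟩⟩
  · exact mem_limsup_iff_frequently_mem.2 hA
  · refine mem_limsup_iff_frequently_mem.2 (hB.mono fun k hk => ?_)
    simpa only [keepsAt, Set.mem_ofPred_eq, haddr] using hk

variable {μ : Measure (EuclideanSpace ℝ (Fin d))} [IsProbabilityMeasure μ]

theorem IsMedianHeights.ae_eq_self_of_map_eq (hS : GoodSchedule S) (hmed : IsMedianHeights S μ h)
    {u : ℝᵈ → ℝᵈ} (hu : Measurable u) (hmap : μ.map u = μ)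
    (hcell : ∀ b, ∀ᵐ x ∂μ, x ∈ cell S h b → u x ∈ cell S h b) :
    ∀ᵐ x ∂μ, u x = x := by
  obtain ⟨v, -, hv⟩ := hS
  let N : Fin d → ℚ → Set ℝᵈ := fun i q =>
    keepsOften S h {w | ⟪v i, w⟫ ≤ q} ∩ {w | ⟪v i, w⟫ ≤ q} ∪
      keepsOften S h {w | q ≤ ⟪v i, w⟫} ∩ {w | q ≤ ⟪v i, w⟫}
  have hinner : ∀ i, Measurable fun w : ℝᵈ => ⟪v i, w⟫ := fun i =>
    measurable_const.inner measurable_id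
  have hgood : ∀ᵐ x ∂μ, ∀ i q, x ∉ N i q :=
    ae_all_iff.2 fun i => ae_all_iff.2 fun q => measure_eq_zero_iff_ae_notMem.1 <|
      measure_union_null (hmed.measure_keepsOften_inter (measurableSet_le (hinner i) measurable_const))
        (hmed.measure_keepsOften_inter (measurableSet_le measurable_const (hinner i)))
  have hugood : ∀ᵐ x ∂μ, ∀ i q, u x ∉ N i q :=
    (MeasurePreserving.quasiMeasurePreserving ⟨hu, hmap⟩).ae hgood
  have haddr : ∀ᵐ x ∂μ, ∀ k, addr S h (u x) k = addr S h x k := by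
    filter_upwards [ae_all_iff.2 hcell] with x hx k
    exact (addr_eq_iff_mem_cell S h (length_addr S h x k) _).2 (hx _ (mem_cell_addr S h x k))
  filter_upwards [haddr, hgood, hugood] with x hax hx hux
  refine InnerProductSpace.ext_inner_left_basis v fun i => ?_
  rcases lt_trichotomy ⟪v i, u x⟫ ⟪v i, x⟫ with hlt | heq | hgt
  · obtain ⟨q, hq⟩ := exists_rat_mem_keepsOften (hv · i) (fun k => (hax k).symm) hlt
    exact (hq.elim (hux i q <| .inl ·) (hx i q <| .inr ·)).elim
  · exact heq
  · obtain ⟨q, hq⟩ := exists_rat_mem_keepsOften (hv · i) hax hgt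
    exact (hq.elim (hx i q <| .inl ·) (hux i q <| .inr ·)).elim

theorem IsMedianHeights.ae_eq_add_of_isNoCollisionMap (hS : GoodSchedule S)
    (hmed : IsMedianHeights S μ h) (δ : ℝᵈ) {t : ℝᵈ → ℝᵈ}
    (ht : IsNoCollisionMap S h (fun b => h b + ⟪S.dir b, δ⟫) μ (μ.map (· + δ)) t) :
    t =ᵐ[μ] (· + δ) := by
  obtain ⟨htm, htmap, htcell⟩ := ht
  have hmap : μ.map (fun x => t x - δ) = μ := by
    change μ.map ((· - δ) ∘ t) = μ
    rw [← Measure.map_map (measurable_sub_const δ) htm, htmap,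
      Measure.map_map (measurable_sub_const δ) (measurable_add_const δ)]
    simp [Function.comp_def]
  have hcell : ∀ b, ∀ᵐ x ∂μ, x ∈ cell S h b → t x - δ ∈ cell S h b := fun b => by
    filter_upwards [htcell b] with x hx hxb
    exact (mem_cell_translate_iff S h δ b (t x)).1 (hx hxb)
  filter_upwards [hmed.ae_eq_self_of_map_eq hS (htm.sub_const δ) hmap hcell] with x hx
  exact sub_eq_iff_eq_add.1 hx

end Uniqueness

theorem rpow_integral_norm_sub_rpow_of_ae_eq_add {E : Type*} [NormedAddCommGroup E]
    [MeasurableSpace E] {μ : Measure E} [IsProbabilityMeasure μ] {t : E → E} {δ : E}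
    (ht : t =ᵐ[μ] (· + δ)) {p : ℝ} (hp : p ≠ 0) :
    (∫ x, ‖t x - x‖ ^ p ∂μ) ^ (1 / p) = ‖δ‖ := by
  have hconst : ∀ᵐ x ∂μ, ‖t x - x‖ ^ p = ‖δ‖ ^ p := by
    filter_upwards [ht] with x hx
    rw [hx, add_sub_cancel_left]
  rw [integral_congr_ae hconst, integral_const, probReal_univ, one_smul,
    ← Real.rpow_mul (norm_nonneg δ), mul_one_div_cancel hp, Real.rpow_one]

/-- For `μ₀ ∈ 𝒦` and `μ_θ = (x+θ)♯μ₀`: the slicing cells of `μ_θ` are the translates of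
those of `μ₀` (`Ω^{μ_θ}_b = Ω^{μ₀}_b + θ`), hence `ℓ^{μ_θ}(x) = ℓ^{μ₀}(x−θ)`, the
no-collision map from `μ₀` to `μ_θ` is `x ↦ x + θ` a.e., and
`W_{𝒮,p}(μ_θ, μ_{θ'}) = |θ − θ'|` for all `p ≥ 1`. -/
theorem no_collision_translation
    (μ₀ : Measure (EuclideanSpace ℝ (Fin d))) (hK : MemK μ₀)
    (θ θ' : EuclideanSpace ℝ (Fin d))
    (S : Slicing d) (hS : GoodSchedule S)
    (h₀ : List Bool → ℝ) (hmed : IsMedianHeights S μ₀ h₀) :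
    let μθ := μ₀.map (· + θ)
    let μθ' := μ₀.map (· + θ')
    let hθ : List Bool → ℝ := fun b => h₀ b + ⟪S.dir b, θ⟫
    let hθ' : List Bool → ℝ := fun b => h₀ b + ⟪S.dir b, θ'⟫
    IsMedianHeights S μθ hθ ∧
    (∀ b, cell S hθ b = (fun x => x + θ) '' cell S h₀ b) ∧
    (∀ x, ell S hθ x = ell S h₀ (x - θ)) ∧
    (∀ t, IsNoCollisionMap S h₀ hθ μ₀ μθ t → t =ᵐ[μ₀] (· + θ)) ∧
    (∀ p : ℝ, 1 ≤ p → ∀ t, IsNoCollisionMap S hθ hθ' μθ μθ' t →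
      (∫ x, ‖t x - x‖ ^ p ∂μθ) ^ (1 / p) = ‖θ - θ'‖) := by
  intro μθ μθ' hθ hθ'
  have hμ₀ : IsProbabilityMeasure μ₀ := hK.1
  have hmedθ : IsMedianHeights S μθ hθ := hmed.map_add_const S h₀ θ
  refine ⟨hmedθ, cell_translate S h₀ θ, ell_translate S h₀ θ,
    fun t => hmed.ae_eq_add_of_isNoCollisionMap hS θ, fun p hp t ht => ?_⟩
  have hμθ' : μθ' = μθ.map (· + (θ' - θ)) := by
    rw [Measure.map_map (measurable_add_const _) (measurable_add_const θ)]
    simp [μθ', Function.comp_def]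
  have hhθ' : hθ' = fun b => hθ b + ⟪S.dir b, θ' - θ⟫ := by
    simp [hθ, hθ', inner_sub_right]
  have hμθ : IsProbabilityMeasure μθ := Measure.isProbabilityMeasure_map (measurable_add_const θ).aemeasurable
  rw [hμθ', hhθ'] at ht
  rw [rpow_integral_norm_sub_rpow_of_ae_eq_add (hmedθ.ae_eq_add_of_isNoCollisionMap hS _ ht)
    (by positivity), norm_sub_rev]
end
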